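/- arXiv:2402.05846 — 2 statements merged into one kernel-verified Lean document; each statement's English description precedes it below -/
import Mathlib

section
/- For a semigroup S, the following are equivalent: (1) H_L(S) = 1 and H_R(S) = 1; (2) H_L(S) = 1 and H_R(S) is finite; (3) H_L(S) = 1 and S is stable; (4) H_R(S) = 1 and H_L(S) is finite; (5) H_R(S) = 1 and S is stable; (6) H_J(S) = 1 and S is stable; (7) H_H(S) = 1; (8) S is completely simple. -/
/-!
Every condition is equivalent to: `S` is nonempty and the preorders `≤_L` and `≤_R` are both
symmetric (every `L`-class and every `R`-class is minimal). Symmetry of `≤_L` alone already makes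
`S` simple, since `a ≤_L b * a` puts `a` in `S¹ b S¹`; and in a simple semigroup stability is
exactly symmetry of `≤_L` and `≤_R`. Finite `R`-height gives right stability: if `b = u b q`, the
`R`-chain `b ≥ b q ≥ b q² ≥ ⋯` stabilises at some `b qⁿ R b qⁿ⁺¹`, and multiplying on the left by
`uⁿ` turns this into `b R b q`. Computations are carried out in the monoid `S¹ = WithOne S`.
-/

namespace GreenHeights

universe u

section Defs

variable {S : Type u} [Semigroup S]

/-- Green's preorder `≤_L`: `a ≤_L b` iff `a = s * b` for some `s ∈ S¹`
(i.e. `a = b` or `a = s * b` for some `s ∈ S`). -/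
def leL (a b : S) : Prop := a = b ∨ ∃ s : S, a = s * b

/-- Green's preorder `≤_R`: `a ≤_R b` iff `a = b * s` for some `s ∈ S¹`. -/
def leR (a b : S) : Prop := a = b ∨ ∃ s : S, a = b * s

/-- Green's preorder `≤_J`: `a ≤_J b` iff `a = s * b * t` for some `s, t ∈ S¹`. -/
def leJ (a b : S) : Prop :=
  a = b ∨ (∃ s : S, a = s * b) ∨ (∃ t : S, a = b * t) ∨ ∃ s t : S, a = s * b * t

/-- Green's preorder `≤_H`. -/
def leH (a b : S) : Prop := leL a b ∧ leR a b

/-- Green's relation `L`. -/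
def eqvL (a b : S) : Prop := leL a b ∧ leL b a

/-- Green's relation `R`. -/
def eqvR (a b : S) : Prop := leR a b ∧ leR b a

/-- Green's relation `J`. -/
def eqvJ (a b : S) : Prop := leJ a b ∧ leJ b a

/-- Green's relation `H`. -/
def eqvH (a b : S) : Prop := leH a b ∧ leH b a

/-- `a <_L b`. -/
def ltL (a b : S) : Prop := leL a b ∧ ¬ leL b a

/-- `a <_R b`. -/
def ltR (a b : S) : Prop := leR a b ∧ ¬ leR b a

/-- `a <_J b`. -/
def ltJ (a b : S) : Prop := leJ a b ∧ ¬ leJ b a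

/-- `a <_H b`. -/
def ltH (a b : S) : Prop := leH a b ∧ ¬ leH b a

end Defs

/-- The set of lengths of strictly decreasing chains with respect to a relation `lt`:
`m` is a chain length if there is a sequence `c 0 >' c 1 >' … >' c (m-1)`. -/
def chainLengths {T : Type u} (lt : T → T → Prop) : Set ℕ :=
  {m | ∃ c : Fin m → T, ∀ i j : Fin m, i < j → lt (c j) (c i)}

/-- The height: the supremum, in `ℕ∞`, of the lengths of strictly decreasing chains. -/
noncomputable def heightOf {T : Type u} (lt : T → T → Prop) : ℕ∞ :=
  ⨆ m ∈ chainLengths lt, (m : ℕ∞)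

/-- The `L`-height of a semigroup. -/
noncomputable def HL (S : Type u) [Semigroup S] : ℕ∞ := heightOf (ltL (S := S))

/-- The `R`-height of a semigroup. -/
noncomputable def HR (S : Type u) [Semigroup S] : ℕ∞ := heightOf (ltR (S := S))

/-- The `J`-height of a semigroup. -/
noncomputable def HJ (S : Type u) [Semigroup S] : ℕ∞ := heightOf (ltJ (S := S))

/-- The `H`-height of a semigroup. -/
noncomputable def HH (S : Type u) [Semigroup S] : ℕ∞ := heightOf (ltH (S := S))

/-- `S` is left stable if `a ≤_L b` and `a J b` imply `a L b`. -/
def LeftStable (S : Type u) [Semigroup S] : Prop :=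
  ∀ a b : S, leL a b → eqvJ a b → eqvL a b

/-- `S` is right stable if `a ≤_R b` and `a J b` imply `a R b`. -/
def RightStable (S : Type u) [Semigroup S] : Prop :=
  ∀ a b : S, leR a b → eqvJ a b → eqvR a b

/-- `S` is stable if it is both left and right stable. -/
def Stable (S : Type u) [Semigroup S] : Prop := LeftStable S ∧ RightStable S

section Stmt5

variable (S : Type u) [Semigroup S]

/-- `S` is simple: any two elements are `J`-related. -/
def SimpleSemigroup : Prop := ∀ a b : S, eqvJ a b

/-- `S` is completely simple: simple, with a minimal `L`-class and a minimal `R`-class. -/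
def CompletelySimple : Prop :=
  SimpleSemigroup S ∧
  (∃ a : S, ∀ b : S, leL b a → eqvL b a) ∧
  (∃ a : S, ∀ b : S, leR b a → eqvR b a)

end Stmt5

section Height

variable {T : Type u}

theorem natCast_le_heightOf {lt : T → T → Prop} {m : ℕ} (hm : m ∈ chainLengths lt) :
    (m : ℕ∞) ≤ heightOf lt :=
  le_iSup₂ (f := fun (m : ℕ) (_ : m ∈ chainLengths lt) => (m : ℕ∞)) m hm

theorem heightOf_le_one_iff {lt : T → T → Prop} : heightOf lt ≤ 1 ↔ ∀ a b, ¬ lt a b := by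
  refine ⟨fun h a b hab => ?_, fun h => iSup₂_le fun m ⟨c, hc⟩ => ?_⟩
  · have h2 : 2 ∈ chainLengths lt := ⟨![b, a], by simp [Fin.forall_fin_two, hab]⟩
    exact absurd ((natCast_le_heightOf h2).trans h) (by norm_num)
  · by_contra! hm
    have hm : 1 < m := by exact_mod_cast hm
    exact h _ _ (hc ⟨0, by omega⟩ ⟨1, hm⟩ Nat.zero_lt_one)

theorem one_le_heightOf_iff {lt : T → T → Prop} : 1 ≤ heightOf lt ↔ Nonempty T := by
  refine ⟨fun h => ?_, fun ⟨x⟩ => ?_⟩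
  · by_contra hT
    refine absurd h (not_le.2 (lt_of_le_of_lt (iSup₂_le fun m ⟨c, _⟩ => ?_) zero_lt_one))
    cases m with
    | zero => exact le_rfl
    | succ m => exact absurd ⟨c 0⟩ hT
  · exact_mod_cast natCast_le_heightOf (m := 1) ⟨fun _ => x, fun i j hij => absurd hij (by omega)⟩

theorem heightOf_eq_one_iff {lt : T → T → Prop} :
    heightOf lt = 1 ↔ Nonempty T ∧ ∀ a b, ¬ lt a b := by
  rw [le_antisymm_iff, heightOf_le_one_iff, one_le_heightOf_iff, and_comm]

theorem heightOf_eq_top_of_forall_lt {lt : T → T → Prop} (f : ℕ → T)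
    (hf : ∀ i j, i < j → lt (f j) (f i)) : heightOf lt = ⊤ :=
  eq_top_iff.2 <| ENat.forall_natCast_le_iff_le.1 fun _ _ =>
    natCast_le_heightOf ⟨fun i => f i, fun i j hij => hf i j hij⟩

theorem exists_le_succ_of_heightOf_lt_top (le : T → T → Prop) [IsPreorder T le]
    (h : heightOf (fun a b => le a b ∧ ¬ le b a) < ⊤) (f : ℕ → T)
    (hf : ∀ n, le (f (n + 1)) (f n)) : ∃ n, le (f n) (f (n + 1)) := by
  by_contra! hc
  -- its `<` is definitionally the relation whose height is `h`
  let _ : Preorder T := { le := le, le_refl := refl_of le, le_trans := fun _ _ _ => trans_of le }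
  have hanti : StrictAnti f := strictAnti_nat_of_succ_lt fun n => ⟨hf n, hc n⟩
  exact h.ne (heightOf_eq_top_of_forall_lt f fun i j hij => hanti hij)

theorem heightOf_eq_one_iff_symm {le : T → T → Prop} :
    heightOf (fun a b => le a b ∧ ¬ le b a) = 1 ↔ Nonempty T ∧ Std.Symm le := by
  simp only [heightOf_eq_one_iff, not_and, not_not]
  exact and_congr_right' ⟨fun h => ⟨h⟩, fun h => h.symm⟩

end Height

section Green

variable {S : Type u} [Semigroup S]

local notation "S¹" => WithOne S

theorem leL_iff {a b : S} : leL a b ↔ ∃ s : S¹, (a : S¹) = s * b := by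
  refine ⟨?_, fun ⟨s, h⟩ => ?_⟩
  · rintro (rfl | ⟨s, rfl⟩)
    exacts [⟨1, (one_mul _).symm⟩, ⟨s, WithOne.coe_mul s b⟩]
  · cases s with
    | one => exact Or.inl (WithOne.coe_inj.1 (by simpa using h))
    | coe s => exact Or.inr ⟨s, WithOne.coe_inj.1 h⟩

theorem leR_iff {a b : S} : leR a b ↔ ∃ s : S¹, (a : S¹) = b * s := by
  refine ⟨?_, fun ⟨s, h⟩ => ?_⟩
  · rintro (rfl | ⟨s, rfl⟩)
    exacts [⟨1, (mul_one _).symm⟩, ⟨s, WithOne.coe_mul b s⟩]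
  · cases s with
    | one => exact Or.inl (WithOne.coe_inj.1 (by simpa using h))
    | coe s => exact Or.inr ⟨s, WithOne.coe_inj.1 h⟩

theorem leJ_iff {a b : S} : leJ a b ↔ ∃ s t : S¹, (a : S¹) = s * b * t := by
  refine ⟨?_, fun ⟨s, t, h⟩ => ?_⟩
  · rintro (rfl | ⟨s, rfl⟩ | ⟨t, rfl⟩ | ⟨s, t, rfl⟩)
    exacts [⟨1, 1, by simp⟩, ⟨s, 1, by simp⟩, ⟨1, t, by simp⟩, ⟨s, t, by simp⟩]
  · cases s <;> cases t
    all_goals simp only [one_mul, mul_one, ← WithOne.coe_mul, WithOne.coe_inj] at h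
    exacts [Or.inl h, Or.inr (Or.inr (Or.inl ⟨_, h⟩)), Or.inr (Or.inl ⟨_, h⟩),
      Or.inr (Or.inr (Or.inr ⟨_, _, h⟩))]

theorem exists_coe_eq_mul_coe (s : S¹) (a : S) : ∃ c : S, (c : S¹) = s * a := by
  cases s
  exacts [⟨a, (one_mul _).symm⟩, ⟨_ * a, WithOne.coe_mul _ a⟩]

theorem exists_coe_eq_coe_mul (a : S) (s : S¹) : ∃ c : S, (c : S¹) = a * s := by
  cases s
  exacts [⟨a, (mul_one _).symm⟩, ⟨a * _, WithOne.coe_mul a _⟩]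

instance : IsPreorder S leL where
  refl _ := Or.inl rfl
  trans _ _ _ hab hbc := by
    obtain ⟨s, hs⟩ := leL_iff.1 hab
    obtain ⟨t, ht⟩ := leL_iff.1 hbc
    exact leL_iff.2 ⟨s * t, by rw [hs, ht, mul_assoc]⟩

instance : IsPreorder S leR where
  refl _ := Or.inl rfl
  trans _ _ _ hab hbc := by
    obtain ⟨s, hs⟩ := leR_iff.1 hab
    obtain ⟨t, ht⟩ := leR_iff.1 hbc
    exact leR_iff.2 ⟨t * s, by rw [hs, ht, mul_assoc]⟩

theorem HL_eq_one_iff : HL S = 1 ↔ Nonempty S ∧ Std.Symm (leL (S := S)) :=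
  heightOf_eq_one_iff_symm

theorem HR_eq_one_iff : HR S = 1 ↔ Nonempty S ∧ Std.Symm (leR (S := S)) :=
  heightOf_eq_one_iff_symm

theorem HJ_eq_one_iff : HJ S = 1 ↔ Nonempty S ∧ Std.Symm (leJ (S := S)) :=
  heightOf_eq_one_iff_symm

theorem HH_eq_one_iff : HH S = 1 ↔ Nonempty S ∧ Std.Symm (leH (S := S)) :=
  heightOf_eq_one_iff_symm

theorem leR_mul_of_coe_eq (h : HR S < ⊤) {b q : S} {u : S¹} (hb : (b : S¹) = u * b * q) :
    leR b (b * q) := by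
  let f : ℕ → S := fun n => (· * q)^[n] b
  have hf : ∀ n, f (n + 1) = f n * q := fun n => Function.iterate_succ_apply' _ n b
  have hf_coe : ∀ n, (f n : S¹) = b * q ^ n := by
    intro n
    induction n with
    | zero => exact (mul_one _).symm
    | succ n ih => rw [hf, WithOne.coe_mul, ih, pow_succ, mul_assoc]
  have hb_pow : ∀ n, (b : S¹) = u ^ n * (b * q ^ n) := by
    intro n
    induction n with
    | zero => simp
    | succ n ih =>
      calc (b : S¹) = u ^ n * (b * q ^ n) := ih
        _ = u ^ n * (u * b * q * q ^ n) := by rw [← hb]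
        _ = u ^ (n + 1) * (b * q ^ (n + 1)) := by rw [pow_succ, pow_succ']; simp only [mul_assoc]
  obtain ⟨n, hn⟩ := exists_le_succ_of_heightOf_lt_top leR h f fun n => Or.inr ⟨q, hf n⟩
  obtain ⟨t, ht⟩ := leR_iff.1 hn
  refine leR_iff.2 ⟨t, ?_⟩
  calc (b : S¹) = u ^ n * f n := by rw [hf_coe, ← hb_pow]
    _ = u ^ n * (b * q ^ n) * q * t := by
      rw [ht, hf, WithOne.coe_mul, hf_coe]; simp only [mul_assoc]
    _ = ↑(b * q) * t := by rw [← hb_pow, WithOne.coe_mul]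

theorem leL_mul_of_coe_eq (h : HL S < ⊤) {b q : S} {u : S¹} (hb : (b : S¹) = q * b * u) :
    leL b (q * b) := by
  let f : ℕ → S := fun n => (q * ·)^[n] b
  have hf : ∀ n, f (n + 1) = q * f n := fun n => Function.iterate_succ_apply' _ n b
  have hf_coe : ∀ n, (f n : S¹) = q ^ n * b := by
    intro n
    induction n with
    | zero => exact (one_mul _).symm
    | succ n ih => rw [hf, WithOne.coe_mul, ih, pow_succ', mul_assoc]
  have hb_pow : ∀ n, (b : S¹) = q ^ n * b * u ^ n := by
    intro n
    induction n with
    | zero => simp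
    | succ n ih =>
      calc (b : S¹) = q ^ n * b * u ^ n := ih
        _ = q ^ n * (q * b * u) * u ^ n := by rw [← hb]
        _ = q ^ (n + 1) * b * u ^ (n + 1) := by rw [pow_succ, pow_succ']; simp only [mul_assoc]
  obtain ⟨n, hn⟩ := exists_le_succ_of_heightOf_lt_top leL h f fun n => Or.inr ⟨q, hf n⟩
  obtain ⟨t, ht⟩ := leL_iff.1 hn
  refine leL_iff.2 ⟨t, ?_⟩
  calc (b : S¹) = f n * u ^ n := by rw [hf_coe, ← hb_pow]
    _ = t * q * (q ^ n * b * u ^ n) := by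
      rw [ht, hf, WithOne.coe_mul, hf_coe]; simp only [mul_assoc]
    _ = t * ↑(q * b) := by rw [← hb_pow, WithOne.coe_mul, mul_assoc]

theorem leR_of_leR_of_leL (h : HR S < ⊤) {b c : S} (hcb : leR c b) (hbc : leL b c) :
    leR b c := by
  obtain ⟨q, hq⟩ := leR_iff.1 hcb
  obtain ⟨u, hu⟩ := leL_iff.1 hbc
  cases q with
  | one => exact Or.inl (WithOne.coe_inj.1 (by rw [hq, mul_one])).symm
  | coe q =>
    rw [WithOne.coe_inj.1 (hq.trans (WithOne.coe_mul b q).symm)]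
    exact leR_mul_of_coe_eq h (by rw [mul_assoc, ← hq]; exact hu)

theorem leL_of_leL_of_leR (h : HL S < ⊤) {b c : S} (hcb : leL c b) (hbc : leR b c) :
    leL b c := by
  obtain ⟨q, hq⟩ := leL_iff.1 hcb
  obtain ⟨u, hu⟩ := leR_iff.1 hbc
  cases q with
  | one => exact Or.inl (WithOne.coe_inj.1 (by rw [hq, one_mul])).symm
  | coe q =>
    rw [WithOne.coe_inj.1 (hq.trans (WithOne.coe_mul q b).symm)]
    exact leL_mul_of_coe_eq h (by rw [← hq]; exact hu)

theorem rightStable_of_HR_lt_top (h : HR S < ⊤) : RightStable S := by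
  intro a b hab hJ
  obtain ⟨u, v, hb⟩ := leJ_iff.1 hJ.2
  obtain ⟨c, hc⟩ := exists_coe_eq_coe_mul a v
  have hca : leR c a := leR_iff.2 ⟨v, hc⟩
  have hbc : leL b c := leL_iff.2 ⟨u, by rw [hc, hb, mul_assoc]⟩
  exact ⟨hab, trans_of leR (leR_of_leR_of_leL h (trans_of leR hca hab) hbc) hca⟩

theorem leftStable_of_HL_lt_top (h : HL S < ⊤) : LeftStable S := by
  intro a b hab hJ
  obtain ⟨u, v, hb⟩ := leJ_iff.1 hJ.2
  obtain ⟨c, hc⟩ := exists_coe_eq_mul_coe u a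
  have hca : leL c a := leL_iff.2 ⟨u, hc⟩
  have hbc : leR b c := leR_iff.2 ⟨v, by rw [hc, hb]⟩
  exact ⟨hab, trans_of leL (leL_of_leL_of_leR h (trans_of leL hca hab) hbc) hca⟩

theorem simpleSemigroup_of_symm_leL (h : Std.Symm (leL (S := S))) : SimpleSemigroup S := by
  have hJ : ∀ a b : S, leJ a b := fun a b => by
    obtain ⟨w, hw⟩ := leL_iff.1 (h.symm (b * a) a (Or.inr ⟨b, rfl⟩))
    exact leJ_iff.2 ⟨w, a, by rwa [WithOne.coe_mul, ← mul_assoc] at hw⟩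
  exact fun a b => ⟨hJ a b, hJ b a⟩

theorem simpleSemigroup_of_symm_leR (h : Std.Symm (leR (S := S))) : SimpleSemigroup S := by
  have hJ : ∀ a b : S, leJ a b := fun a b => by
    obtain ⟨t, ht⟩ := leR_iff.1 (h.symm (a * b) a (Or.inr ⟨b, rfl⟩))
    exact leJ_iff.2 ⟨a, t, by rwa [WithOne.coe_mul] at ht⟩
  exact fun a b => ⟨hJ a b, hJ b a⟩

theorem simpleSemigroup_of_symm_leJ (h : Std.Symm (leJ (S := S))) : SimpleSemigroup S := by
  have hJ : ∀ a b : S, leJ b a := fun a b => by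
    obtain ⟨s, t, hst⟩ := leJ_iff.1 (h.symm (a * b) b (Or.inr (Or.inl ⟨a, rfl⟩)))
    exact leJ_iff.2 ⟨s, b * t, by rwa [WithOne.coe_mul, mul_assoc, mul_assoc, ← mul_assoc s] at hst⟩
  exact fun a b => ⟨hJ b a, hJ a b⟩

theorem symm_leL_of_leftStable (hs : SimpleSemigroup S) (hl : LeftStable S) :
    Std.Symm (leL (S := S)) :=
  ⟨fun a b hab => (hl a b hab (hs a b)).2⟩

theorem symm_leR_of_rightStable (hs : SimpleSemigroup S) (hr : RightStable S) :
    Std.Symm (leR (S := S)) :=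
  ⟨fun a b hab => (hr a b hab (hs a b)).2⟩

theorem leftStable_of_symm_leL (h : Std.Symm (leL (S := S))) : LeftStable S :=
  fun a b hab _ => ⟨hab, h.symm a b hab⟩

theorem rightStable_of_symm_leR (h : Std.Symm (leR (S := S))) : RightStable S :=
  fun a b hab _ => ⟨hab, h.symm a b hab⟩

theorem symm_leJ_of_simpleSemigroup (h : SimpleSemigroup S) : Std.Symm (leJ (S := S)) :=
  ⟨fun a b _ => (h a b).2⟩

theorem symm_leH_of_symm (hl : Std.Symm (leL (S := S))) (hr : Std.Symm (leR (S := S))) :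
    Std.Symm (leH (S := S)) :=
  ⟨fun a b hab => ⟨hl.symm a b hab.1, hr.symm a b hab.2⟩⟩

theorem symm_leL_of_symm_leH (h : Std.Symm (leH (S := S))) : Std.Symm (leL (S := S)) := by
  refine ⟨fun a b hab => ?_⟩
  rcases hab with rfl | ⟨s, rfl⟩
  · exact refl_of leL a
  · have hb : leH b (b * (s * b)) :=
      h.symm _ _ ⟨Or.inr ⟨b * s, (mul_assoc ..).symm⟩, Or.inr ⟨_, rfl⟩⟩
    obtain ⟨w, hw⟩ := leL_iff.1 hb.1
    exact leL_iff.2 ⟨w * b, by rwa [WithOne.coe_mul, ← mul_assoc] at hw⟩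

theorem symm_leR_of_symm_leH (h : Std.Symm (leH (S := S))) : Std.Symm (leR (S := S)) := by
  refine ⟨fun a b hab => ?_⟩
  rcases hab with rfl | ⟨s, rfl⟩
  · exact refl_of leR a
  · have hb : leH b (b * s * b) :=
      h.symm _ _ ⟨Or.inr ⟨_, rfl⟩, Or.inr ⟨s * b, mul_assoc ..⟩⟩
    obtain ⟨w, hw⟩ := leR_iff.1 hb.2
    exact leR_iff.2 ⟨b * w, by rwa [WithOne.coe_mul, mul_assoc] at hw⟩

theorem symm_leL_of_completelySimple (h : CompletelySimple S) : Std.Symm (leL (S := S)) := by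
  obtain ⟨hs, ⟨a, ha⟩, -⟩ := h
  refine ⟨fun x y hxy => ?_⟩
  obtain ⟨s, t, hy⟩ := leJ_iff.1 (hs y a).1
  obtain ⟨w, hx⟩ := leL_iff.1 hxy
  obtain ⟨c, hc⟩ := exists_coe_eq_mul_coe (w * s) a
  -- `c = w s a ≤_L a`, so minimality gives `a = r c`, and then `y = s a t = s r x`
  obtain ⟨r, hr⟩ := leL_iff.1 (ha c (leL_iff.2 ⟨w * s, hc⟩)).2
  refine leL_iff.2 ⟨s * r, ?_⟩
  calc (y : S¹) = s * a * t := hy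
    _ = s * (r * c) * t := by rw [← hr]
    _ = s * r * (w * s * a * t) := by rw [hc]; simp only [mul_assoc]
    _ = s * r * x := by rw [hx, hy]; simp only [mul_assoc]

theorem symm_leR_of_completelySimple (h : CompletelySimple S) : Std.Symm (leR (S := S)) := by
  obtain ⟨hs, -, ⟨a, ha⟩⟩ := h
  refine ⟨fun x y hxy => ?_⟩
  obtain ⟨s, t, hy⟩ := leJ_iff.1 (hs y a).1
  obtain ⟨w, hx⟩ := leR_iff.1 hxy
  obtain ⟨c, hc⟩ := exists_coe_eq_coe_mul a (t * w)
  obtain ⟨r, hr⟩ := leR_iff.1 (ha c (leR_iff.2 ⟨t * w, hc⟩)).2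
  refine leR_iff.2 ⟨r * t, ?_⟩
  calc (y : S¹) = s * a * t := hy
    _ = s * (c * r) * t := by rw [← hr]
    _ = s * a * t * w * r * t := by rw [hc]; simp only [mul_assoc]
    _ = x * (r * t) := by rw [hx, hy]; simp only [mul_assoc]

theorem completelySimple_iff :
    CompletelySimple S ↔ Nonempty S ∧ Std.Symm (leL (S := S)) ∧ Std.Symm (leR (S := S)) := by
  refine ⟨fun h => ?_, fun ⟨⟨x⟩, hl, hr⟩ => ?_⟩
  · obtain ⟨a, -⟩ := h.2.1
    exact ⟨⟨a⟩, symm_leL_of_completelySimple h, symm_leR_of_completelySimple h⟩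
  · exact ⟨simpleSemigroup_of_symm_leL hl, ⟨x, fun b hb => ⟨hb, hl.symm b x hb⟩⟩,
      ⟨x, fun b hb => ⟨hb, hr.symm b x hb⟩⟩⟩

end Green

/-- Equivalent characterisations of completely simple semigroups in terms
of Green heights and stability. -/
theorem completely_simple_tfae (S : Type u) [Semigroup S] :
    List.TFAE [HL S = 1 ∧ HR S = 1,
      HL S = 1 ∧ HR S < ⊤,
      HL S = 1 ∧ Stable S,
      HR S = 1 ∧ HL S < ⊤,
      HR S = 1 ∧ Stable S,
      HJ S = 1 ∧ Stable S,
      HH S = 1,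
      CompletelySimple S] := by
  rw [HL_eq_one_iff, HR_eq_one_iff, HJ_eq_one_iff, HH_eq_one_iff, completelySimple_iff]
  tfae_have 8 → 1 := fun ⟨hne, hl, hr⟩ => ⟨⟨hne, hl⟩, hne, hr⟩
  tfae_have 1 → 2 := fun ⟨hl, hr⟩ => ⟨hl, (HR_eq_one_iff.2 hr).trans_lt ENat.one_lt_top⟩
  tfae_have 2 → 3 := fun ⟨⟨hne, hl⟩, hR⟩ =>
    ⟨⟨hne, hl⟩, leftStable_of_symm_leL hl, rightStable_of_HR_lt_top hR⟩
  tfae_have 3 → 8 := fun ⟨⟨hne, hl⟩, hst⟩ =>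
    ⟨hne, hl, symm_leR_of_rightStable (simpleSemigroup_of_symm_leL hl) hst.2⟩
  tfae_have 1 → 4 := fun ⟨hl, hr⟩ => ⟨hr, (HL_eq_one_iff.2 hl).trans_lt ENat.one_lt_top⟩
  tfae_have 4 → 5 := fun ⟨⟨hne, hr⟩, hL⟩ =>
    ⟨⟨hne, hr⟩, leftStable_of_HL_lt_top hL, rightStable_of_symm_leR hr⟩
  tfae_have 5 → 8 := fun ⟨⟨hne, hr⟩, hst⟩ =>
    ⟨hne, symm_leL_of_leftStable (simpleSemigroup_of_symm_leR hr) hst.1, hr⟩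
  tfae_have 8 → 6 := fun ⟨hne, hl, hr⟩ =>
    ⟨⟨hne, symm_leJ_of_simpleSemigroup (simpleSemigroup_of_symm_leL hl)⟩,
      leftStable_of_symm_leL hl, rightStable_of_symm_leR hr⟩
  tfae_have 6 → 8 := fun ⟨⟨hne, hj⟩, hst⟩ =>
    ⟨hne, symm_leL_of_leftStable (simpleSemigroup_of_symm_leJ hj) hst.1,
      symm_leR_of_rightStable (simpleSemigroup_of_symm_leJ hj) hst.2⟩
  tfae_have 8 → 7 := fun ⟨hne, hl, hr⟩ => ⟨hne, symm_leH_of_symm hl hr⟩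
  tfae_have 7 → 8 := fun ⟨hne, hh⟩ => ⟨hne, symm_leL_of_symm_leH hh, symm_leR_of_symm_leH hh⟩
  tfae_finish

end GreenHeights
end

section
/- If S is a semigroup such that H_L(S) = 2 or H_R(S) = 2, then H_J(S) ∈ {2, 3}. -/
namespace GreenHeights

universe u

/-!
If `H_L(S) = 2`, every element strictly `L`-below another is `L`-minimal. The `L`-minimal
elements form an ideal lying `J`-below every element, so they make up the least `J`-class,
and a strict pair `x <_L y` is also a strict `J`-pair. Outside that class, a step `b >_J c`
forces `c L b t L t` for some `t`, so `t = v t` with `v ≤_L b`; doing this for two consecutive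
steps `a >_J b >_J c` yields `a ≤_J b`, so no `J`-chain has length 4. The case `H_R(S) = 2`
is the same statement for the opposite semigroup.
-/

section Preorders

variable {S : Type u} [Semigroup S] {a b c v r : S}

theorem leL_refl (a : S) : leL a a := Or.inl rfl

theorem leL_mul_left (s a : S) : leL (s * a) a := Or.inr ⟨s, rfl⟩

theorem leL.trans (hab : leL a b) (hbc : leL b c) : leL a c := by
  rcases hab with rfl | ⟨s, rfl⟩
  · exact hbc
  · rcases hbc with rfl | ⟨u, rfl⟩
    · exact leL_mul_left s _
    · exact Or.inr ⟨s * u, (mul_assoc s u c).symm⟩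

theorem leL.mul_right (h : leL a b) (t : S) : leL (a * t) (b * t) := by
  rcases h with rfl | ⟨s, rfl⟩
  · exact leL_refl _
  · exact Or.inr ⟨s, mul_assoc s b t⟩

theorem eqvL.trans (hab : eqvL a b) (hbc : eqvL b c) : eqvL a c :=
  ⟨hab.1.trans hbc.1, hbc.2.trans hab.2⟩

theorem ltL.trans (hab : ltL a b) (hbc : ltL b c) : ltL a c :=
  ⟨hab.1.trans hbc.1, fun hca => hbc.2 (hca.trans hab.1)⟩

theorem exists_eq_mul_of_leL_mul (h : leL v (a * r)) : ∃ w, leL w a ∧ v = w * r := by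
  rcases h with rfl | ⟨s, rfl⟩
  · exact ⟨a, leL_refl a, rfl⟩
  · exact ⟨s * a, leL_mul_left s a, (mul_assoc s a r).symm⟩

theorem leJ_iff_exists_withOne :
    leJ a b ↔ ∃ s t : WithOne S, (a : WithOne S) = s * b * t := by
  simp only [leJ, WithOne.exists, one_mul, mul_one, ← WithOne.coe_mul, WithOne.coe_inj, exists_or]
  tauto

theorem leJ.trans (hab : leJ a b) (hbc : leJ b c) : leJ a c := by
  obtain ⟨s, t, ha⟩ := leJ_iff_exists_withOne.1 hab
  obtain ⟨s', t', hb⟩ := leJ_iff_exists_withOne.1 hbc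
  exact leJ_iff_exists_withOne.2 ⟨s * s', t' * t, by rw [ha, hb]; simp only [mul_assoc]⟩

theorem leL.leJ (h : leL a b) : leJ a b := by
  rcases h with rfl | ⟨s, rfl⟩
  · exact Or.inl rfl
  · exact Or.inr (Or.inl ⟨s, rfl⟩)

theorem leJ_mul_right (a t : S) : leJ (a * t) a := Or.inr (Or.inr (Or.inl ⟨t, rfl⟩))

end Preorders

section Minimal

variable {S : Type u} [Semigroup S] {a b c d m x y : S}

def IsLMinimal (m : S) : Prop := ∀ w, leL w m → leL m w

theorem IsLMinimal.mul_left (hm : IsLMinimal m) (s : S) : IsLMinimal (s * m) :=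
  fun w hw => (leL_mul_left s m).trans (hm w (hw.trans (leL_mul_left s m)))

theorem IsLMinimal.mul_right (hm : IsLMinimal m) (t : S) : IsLMinimal (m * t) := by
  rintro w (rfl | ⟨u, rfl⟩)
  · exact leL_refl _
  · simpa only [mul_assoc] using (hm _ (leL_mul_left u m)).mul_right t

theorem IsLMinimal.of_leJ (hm : IsLMinimal m) (h : leJ x m) : IsLMinimal x := by
  rcases h with rfl | ⟨s, rfl⟩ | ⟨t, rfl⟩ | ⟨s, t, rfl⟩
  · exact hm
  · exact hm.mul_left s
  · exact hm.mul_right t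
  · exact (hm.mul_left s).mul_right t

theorem IsLMinimal.of_leL (hm : IsLMinimal m) (h : leL x m) : IsLMinimal x :=
  hm.of_leJ h.leJ

theorem IsLMinimal.leJ (hm : IsLMinimal m) (a : S) : leJ m a := by
  rcases hm _ (leL_mul_left a m) with h | ⟨u, h⟩
  · exact Or.inr (Or.inr (Or.inl ⟨m, h⟩))
  · exact Or.inr (Or.inr (Or.inr ⟨u, m, h.trans (mul_assoc u a m).symm⟩))

theorem not_isLMinimal_of_ltJ (h : ltJ x y) : ¬IsLMinimal y :=
  fun hy => h.2 (hy.leJ x)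

theorem ltJ_of_ltL (hx : IsLMinimal x) (h : ltL x y) : ltJ x y :=
  ⟨h.1.leJ, fun hyx => h.2 (hx.of_leJ hyx x h.1)⟩

theorem leL.eqvL_of_not_isLMinimal (hmin : ∀ x y : S, ltL x y → IsLMinimal x)
    (h : leL x y) (hx : ¬IsLMinimal x) : eqvL x y :=
  ⟨h, by_contra fun hyx => hx (hmin x y ⟨h, hyx⟩)⟩

theorem exists_eqvL_mul_of_ltJ (hmin : ∀ x y : S, ltL x y → IsLMinimal x)
    (h : ltJ c b) (hc : ¬IsLMinimal c) : ∃ t, eqvL c (b * t) ∧ eqvL (b * t) t := by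
  obtain ⟨t, hct⟩ : ∃ t, leL c (b * t) := by
    rcases h.1 with rfl | ⟨s, rfl⟩ | ⟨t, rfl⟩ | ⟨s, t, rfl⟩
    · exact absurd (leL_refl c).leJ h.2
    · exact absurd ((leL_mul_left s b).eqvL_of_not_isLMinimal hmin hc).2.leJ h.2
    · exact ⟨t, leL_refl _⟩
    · exact ⟨t, Or.inr ⟨s, mul_assoc s b t⟩⟩
  have hbt : ¬IsLMinimal (b * t) := fun hm => hc (hm.of_leL hct)
  exact ⟨t, hct.eqvL_of_not_isLMinimal hmin hc,
    (leL_mul_left b t).eqvL_of_not_isLMinimal hmin hbt⟩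

theorem isLMinimal_of_ltJ_of_ltJ (hmin : ∀ x y : S, ltL x y → IsLMinimal x)
    (hba : ltJ b a) (hcb : ltJ c b) : IsLMinimal c := by
  -- With `t = v t`, `v ≤_L b L r` and `r = a' r`, `a ≤_L a'`, factor `v = w r` with `w ≤_L a'`:
  -- then `r w` stays above the minimal ideal, so `a' L r w ≤_J r`, whence `a ≤_J b`.
  by_contra hc
  have hb : ¬IsLMinimal b := fun hm => hc (hm.of_leJ hcb.1)
  obtain ⟨t, hct, hbt⟩ := exists_eqvL_mul_of_ltJ hmin hcb hc
  obtain ⟨r, hbar, har⟩ := exists_eqvL_mul_of_ltJ hmin hba hb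
  have hbr : eqvL b r := hbar.trans har
  obtain ⟨v, hvb, hvt⟩ := exists_eq_mul_of_leL_mul hbt.2
  obtain ⟨a', ha'a, ha'r⟩ := exists_eq_mul_of_leL_mul har.2
  have hrt : ¬IsLMinimal (r * t) :=
    fun hm => hc ((hm.of_leL (hbr.1.mul_right t)).of_leL hct.1)
  have ha' : ¬IsLMinimal a' := by
    intro hm
    apply hb
    rw [ha'r] at hbr
    exact (hm.mul_right r).of_leL hbr.1
  have hva'r : leL v (a' * r) := by rw [← ha'r]; exact hvb.trans hbr.1
  obtain ⟨w, hwa', hvw⟩ := exists_eq_mul_of_leL_mul hva'r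
  have hrw : ¬IsLMinimal (r * w) := by
    intro hm
    apply hrt
    have hrwrt : r * w * r * t = r * t := by
      rw [mul_assoc r w r, ← hvw, mul_assoc, ← hvt]
    simpa only [hrwrt] using (hm.mul_right r).mul_right t
  have ha'rw : leL a' (r * w) :=
    (((leL_mul_left r w).trans hwa').eqvL_of_not_isLMinimal hmin hrw).2
  have haa' : leL a a' := (ha'a.eqvL_of_not_isLMinimal hmin ha').2
  exact hba.2 ((haa'.trans ha'rw).leJ.trans ((leJ_mul_right r w).trans hbr.2.leJ))

end Minimal

section Heights

variable {T T' : Type u} {lt : T → T → Prop} {a b c : T}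

theorem mem_chainLengths_of_le {m n : ℕ} (hmn : m ≤ n) (hn : n ∈ chainLengths lt) :
    m ∈ chainLengths lt := by
  obtain ⟨c, hc⟩ := hn
  exact ⟨c ∘ Fin.castLE hmn, fun i j hij => hc _ _ hij⟩

theorem heightOf_le_iff {n : ℕ} : heightOf lt ≤ n ↔ n + 1 ∉ chainLengths lt := by
  simp only [heightOf, iSup₂_le_iff, Nat.cast_le]
  exact ⟨fun h hn => by simpa using h _ hn,
    fun h m hm => by_contra fun hmn => h (mem_chainLengths_of_le (by omega) hm)⟩

theorem le_heightOf_iff {n : ℕ} : (n : ℕ∞) ≤ heightOf lt ↔ n ∈ chainLengths lt := by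
  cases n with
  | zero => exact iff_of_true (zero_le) ⟨Fin.elim0, fun i => i.elim0⟩
  | succ k =>
    rw [Nat.cast_succ, ENat.add_one_le_iff (ENat.natCast_ne_top k), ← not_le, heightOf_le_iff,
      not_not]

theorem mem_chainLengths_two_iff : 2 ∈ chainLengths lt ↔ ∃ a b, lt b a := by
  constructor
  · rintro ⟨c, hc⟩
    exact ⟨c 0, c 1, hc 0 1 (by decide)⟩
  · rintro ⟨a, b, hba⟩
    refine ⟨![a, b], fun i j hij => ?_⟩
    fin_cases i <;> fin_cases j <;> simp_all

theorem three_mem_chainLengths (hba : lt b a) (hcb : lt c b) (hca : lt c a) :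
    3 ∈ chainLengths lt := by
  refine ⟨![a, b, c], fun i j hij => ?_⟩
  fin_cases i <;> fin_cases j <;> simp_all

theorem exists_of_four_mem_chainLengths (h : 4 ∈ chainLengths lt) :
    ∃ a b c d, lt b a ∧ lt c b ∧ lt d c := by
  obtain ⟨c, hc⟩ := h
  exact ⟨c 0, c 1, c 2, c 3, hc 0 1 (by decide), hc 1 2 (by decide), hc 2 3 (by decide)⟩

theorem heightOf_congr {lt' : T' → T' → Prop} (e : T ≃ T') (h : ∀ a b, lt' (e a) (e b) ↔ lt a b) :
    heightOf lt' = heightOf lt := by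
  have hC : chainLengths lt' = chainLengths lt := by
    ext m
    constructor
    · rintro ⟨c, hc⟩
      exact ⟨e.symm ∘ c, fun i j hij => by simpa [← h] using hc i j hij⟩
    · rintro ⟨c, hc⟩
      exact ⟨e ∘ c, fun i j hij => (h _ _).2 (hc i j hij)⟩
  rw [heightOf, heightOf, hC]

end Heights

section Opposite

open MulOpposite

variable {S : Type u} [Semigroup S]

theorem leL_op_iff {a b : S} : leL (op a) (op b) ↔ leR a b := by
  simp only [leL, leR, op_inj, op_surjective.exists, ← op_mul]

theorem leJ_op_iff {a b : S} : leJ (op a) (op b) ↔ leJ a b := by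
  simp only [leJ, op_inj, op_surjective.exists, ← op_mul, mul_assoc]
  exact or_congr_right (or_left_comm.trans (or_congr_right (or_congr_right exists_comm)))

theorem HL_op : HL Sᵐᵒᵖ = HR S :=
  heightOf_congr opEquiv fun _ _ => and_congr leL_op_iff (not_congr leL_op_iff)

theorem HJ_op : HJ Sᵐᵒᵖ = HJ S :=
  heightOf_congr opEquiv fun _ _ => and_congr leJ_op_iff (not_congr leJ_op_iff)

end Opposite

theorem HJ_eq_two_or_three_of_HL_eq_two {S : Type u} [Semigroup S] (h : HL S = 2) :
    HJ S = 2 ∨ HJ S = 3 := by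
  have hmin : ∀ x y : S, ltL x y → IsLMinimal x := by
    intro x y hxy w hwx
    by_contra hxw
    exact heightOf_le_iff.1 h.le (three_mem_chainLengths hxy ⟨hwx, hxw⟩ (ltL.trans ⟨hwx, hxw⟩ hxy))
  obtain ⟨y, x, hxy⟩ := mem_chainLengths_two_iff.1 (le_heightOf_iff.1 h.ge)
  have hlower : 2 ≤ HJ S :=
    le_heightOf_iff.2 (mem_chainLengths_two_iff.2 ⟨y, x, ltJ_of_ltL (hmin x y hxy) hxy⟩)
  have hupper : HJ S ≤ 3 := heightOf_le_iff.2 fun h4 => by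
    obtain ⟨a, b, c, d, hba, hcb, hdc⟩ := exists_of_four_mem_chainLengths h4
    exact not_isLMinimal_of_ltJ hdc (isLMinimal_of_ltJ_of_ltJ hmin hba hcb)
  lift HJ S to ℕ using ne_top_of_le_ne_top (ENat.natCast_ne_top 3) hupper with n
  norm_cast at hlower hupper ⊢
  omega

/-- If `H_L(S) = 2` or `H_R(S) = 2`, then `H_J(S) ∈ {2, 3}`. -/
theorem J_height_two_or_three (S : Type u) [Semigroup S]
    (h : HL S = 2 ∨ HR S = 2) :
    HJ S = 2 ∨ HJ S = 3 := by
  rcases h with hL | hR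
  · exact HJ_eq_two_or_three_of_HL_eq_two hL
  · rw [← HJ_op]
    exact HJ_eq_two_or_three_of_HL_eq_two (HL_op.trans hR)

end GreenHeights
end
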